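/- Let I be a closed or half-open arc of S¹ = ℝ/ℤ with endpoints a ≠ b, and let {f_{p,q}}_{(p,q)∈I²_*} be an intrinsic conic system on I. Suppose F_{a,b} ∩ (a,b) = ∅, and that either f_{a,b} = f_{a,a} or f_{a,b} = f_{b,b} (whichever of these equations is meaningful when I is half-open). Then there exists a sextactic point r ∈ (a,b), i.e. a point r of the open arc with f_{p,q}(r) ≥ 6 for some (p,q) ∈ I²_*. -/

import Mathlib

open Filter Topology

noncomputable section

/-- The circle S¹ = ℝ/ℤ. -/
abbrev S1 := AddCircle (1 : ℝ)

/-- The projection ℝ → S¹. -/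
def pr (x : ℝ) : S1 := (x : S1)

/-- The closed arc from `a` to `b` (for real representatives `a ≤ b`). -/
def arcCC (a b : ℝ) : Set S1 := pr '' Set.Icc a b

/-- The half-open arc `[a,b)`. -/
def arcCO (a b : ℝ) : Set S1 := pr '' Set.Ico a b

/-- The half-open arc `(a,b]`. -/
def arcOC (a b : ℝ) : Set S1 := pr '' Set.Ioc a b

/-- The open arc `(a,b)`. -/
def arcOO (a b : ℝ) : Set S1 := pr '' Set.Ioo a b

/-- `I` is an arc of the circle: the image of an interval of positive length
less than 1 (closed, half-open, or open). -/
def IsArc (I : Set S1) : Prop :=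
  ∃ a b : ℝ, a < b ∧ b < a + 1 ∧
    (I = arcCC a b ∨ I = arcCO a b ∨ I = arcOC a b ∨ I = arcOO a b)

/-- `p ≺ q ≺ r` cyclically: the three points admit representatives
`p̃ < q̃ < r̃ < p̃ + 1`. -/
def cyc3 (p q r : S1) : Prop :=
  ∃ a b c : ℝ, pr a = p ∧ pr b = q ∧ pr c = r ∧ a < b ∧ b < c ∧ c < a + 1

/-- `p ≺ q ≺ r ≺ s` cyclically: the four points admit representatives
`p̃ < q̃ < r̃ < s̃ < p̃ + 1`. -/
def cyc4 (p q r s : S1) : Prop :=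
  ∃ a b c d : ℝ, pr a = p ∧ pr b = q ∧ pr c = r ∧ pr d = s ∧
    a < b ∧ b < c ∧ c < d ∧ d < a + 1

/-- `x` is an isolated point of the set `F`. -/
def IsolatedIn (x : S1) (F : Set S1) : Prop :=
  ∃ U : Set S1, IsOpen U ∧ x ∈ U ∧ U ∩ F = {x}

/-- The set `F` has exactly two connected components. -/
def TwoComponents (F : Set S1) : Prop :=
  ∃ x ∈ F, ∃ y ∈ F, connectedComponentIn F x ≠ connectedComponentIn F y ∧
    ∀ z ∈ F, connectedComponentIn F z = connectedComponentIn F x ∨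
      connectedComponentIn F z = connectedComponentIn F y

/-- An intrinsic circle system on an index set `I ⊆ S¹`: a family of closed
sets `F p` (for `p ∈ I`) satisfying axioms (I0)–(I3). -/
structure IsIntrinsicCircleSystem (I : Set S1) (F : S1 → Set S1) : Prop where
  /-- The sets of the family are closed. -/
  isClosed : ∀ p ∈ I, IsClosed (F p)
  /-- (I0) `p ∈ F p`. -/
  mem_self : ∀ p ∈ I, p ∈ F p
  /-- (I1) if `F p` and `F q` meet then they coincide. -/
  eq_of_inter : ∀ p ∈ I, ∀ q ∈ I, (F p ∩ F q).Nonempty → F p = F q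
  /-- (I2) if `p' ∈ F p`, `q' ∈ F q` and `p ≺ q ≺ p' ≺ q'` cyclically then
  `F p = F q`. -/
  eq_of_cyc : ∀ p ∈ I, ∀ q ∈ I, ∀ p' ∈ F p, ∀ q' ∈ F q,
    cyc4 p q p' q' → F p = F q
  /-- (I3) closedness under limits of sequences from the interior of `I`. -/
  mem_of_tendsto : ∀ (pn qn : ℕ → S1) (p q : S1),
    (∀ n, pn n ∈ interior I) → (∀ n, qn n ∈ interior I) →
    p ∈ I → q ∈ I →
    Tendsto pn atTop (nhds p) → Tendsto qn atTop (nhds q) →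
    (∀ n, qn n ∈ F (pn n)) → q ∈ F p

/-- `p ⪯ q ⪯ p' ⪯ q' ≺ p'' ≺ q'' (≺ p)` cyclically, via representatives
`p̃ ≤ q̃ ≤ p̃' ≤ q̃' < p̃'' < q̃'' < p̃ + 1`. -/
def chain6 (p q p' q' p'' q'' : S1) : Prop :=
  ∃ a b c d e g : ℝ, pr a = p ∧ pr b = q ∧ pr c = p' ∧ pr d = q' ∧
    pr e = p'' ∧ pr g = q'' ∧
    a ≤ b ∧ b ≤ c ∧ c ≤ d ∧ d < e ∧ e < g ∧ g < a + 1

/-- The reverse cyclic order `p ⪰ q ⪰ p' ⪰ q' ≻ p'' ≻ q'' (≻ p)`, via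
representatives `p̃ ≥ q̃ ≥ p̃' ≥ q̃' > p̃'' > q̃'' > p̃ - 1`. -/
def chain6rev (p q p' q' p'' q'' : S1) : Prop :=
  ∃ a b c d e g : ℝ, pr a = p ∧ pr b = q ∧ pr c = p' ∧ pr d = q' ∧
    pr e = p'' ∧ pr g = q'' ∧
    b ≤ a ∧ c ≤ b ∧ d ≤ c ∧ e < d ∧ g < e ∧ a - 1 < g

/-- The index set `I²_* = (Ī × Ī) \ {(p,p) : p ∈ Ī \ I}` of an intrinsic conic
system on `I`. -/
def ConicDom (I : Set S1) : Set (S1 × S1) :=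
  {pq | pq.1 ∈ closure I ∧ pq.2 ∈ closure I ∧ (pq.1 = pq.2 → pq.1 ∈ I)}

/-- The support `F_{p,q} = {r : f_{p,q}(r) > 0}`. -/
def suppF (f : S1 → S1 → S1 → ℕ∞) (p q : S1) : Set S1 := {r | f p q r ≠ 0}

/-- An intrinsic conic system on `I`: a family of functions
`f p q : S¹ → {0,2,4,…} ∪ {∞}`, indexed by `(p,q) ∈ I²_*`, satisfying axioms
(A1)–(A8). -/
structure IsIntrinsicConicSystem (I : Set S1) (f : S1 → S1 → S1 → ℕ∞) : Prop where
  /-- The values of the family are even numbers or `∞`. -/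
  even_values : ∀ p q r : S1, (p, q) ∈ ConicDom I →
    f p q r = ⊤ ∨ ∃ k : ℕ, f p q r = ((2 * k : ℕ) : ℕ∞)
  /-- (A1) the supports are closed. -/
  supp_closed : ∀ p q : S1, (p, q) ∈ ConicDom I → IsClosed (suppF f p q)
  /-- (A1) `p, q ∈ F_{p,q}`. -/
  self_mem : ∀ p q : S1, (p, q) ∈ ConicDom I → f p q p ≠ 0 ∧ f p q q ≠ 0
  /-- (A2) symmetry. -/
  symm : ∀ p q : S1, (p, q) ∈ ConicDom I → f p q = f q p
  /-- (A3) if `F_{p,q}` and `F_{p,r}` share a point `s ≠ p`, then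
  `f_{p,q} = f_{p,r}`. -/
  eq_of_common : ∀ p q r s : S1, (p, q) ∈ ConicDom I → (p, r) ∈ ConicDom I →
    s ≠ p → f p q s ≠ 0 → f p r s ≠ 0 → f p q = f p r
  /-- (A4) interlacing in the (possibly reversed) cyclic order forces
  equality. -/
  eq_of_chain : ∀ p q p' q' p'' q'' : S1,
    (p, p') ∈ ConicDom I → (q, q') ∈ ConicDom I →
    f p p' p'' ≠ 0 → f q q' q'' ≠ 0 →
    (chain6 p q p' q' p'' q'' ∨ chain6rev p q p' q' p'' q'') →
    (p = p' → 4 ≤ f p p' p) → (q = q' → 4 ≤ f q q' q) →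
    f p p' = f q q'
  /-- (A5) if `f_{p,q}(r) ≥ 4` and `r ∈ I` then `f_{r,r} = f_{p,q}`. -/
  eq_diag : ∀ p q r : S1, (p, q) ∈ ConicDom I → 4 ≤ f p q r → r ∈ I →
    f r r = f p q
  /-- (A6) lower semicontinuity of multiplicities under limits, with strict
  increase for pairs of distinct points. -/
  limit_mult : ∀ (pn qn rn₁ rn₂ : ℕ → S1) (p q r : S1) (k₁ k₂ : ℕ),
    (∀ n, (pn n, qn n) ∈ ConicDom I) → (p, q) ∈ ConicDom I →
    Tendsto pn atTop (nhds p) → Tendsto qn atTop (nhds q) →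
    (∀ n, rn₁ n ∈ closure I ∧ rn₁ n ∈ suppF f (pn n) (qn n)) →
    (∀ n, rn₂ n ∈ closure I ∧ rn₂ n ∈ suppF f (pn n) (qn n)) →
    r ∈ closure I →
    Tendsto rn₁ atTop (nhds r) → Tendsto rn₂ atTop (nhds r) →
    (∀ n, (k₁ : ℕ∞) ≤ f (pn n) (qn n) (rn₁ n)) →
    (∀ n, (k₂ : ℕ∞) ≤ f (pn n) (qn n) (rn₂ n)) →
    ((max k₁ k₂ : ℕ) : ℕ∞) ≤ f p q r ∧
      ((∀ n, rn₁ n ≠ rn₂ n) → ((max k₁ k₂ : ℕ) : ℕ∞) < f p q r)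
  /-- (A7) the total multiplicity of `f_{p,q}` is at least six. -/
  total_six : ∀ p q : S1, (p, q) ∈ ConicDom I →
    ∃ s : Finset S1, 6 ≤ ∑ r ∈ s, f p q r
  /-- (A8) if `f_{p,q}(p) = 2` then `p` is isolated in `F_{p,q}`. -/
  isolated_of_two : ∀ p q : S1, (p, q) ∈ ConicDom I → f p q p = 2 →
    IsolatedIn p (suppF f p q)

/-!
Suppose that `(a, b)` contains no sextactic point. Call `y` a gap partner of `x` if
`y ∈ F_{x,x}` and `F_{x,x}` misses the open arc between `x` and `y`; the hypothesis makes `b` a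
gap partner of `a`, or `a` one of `b`.

Let `m > t` be a gap partner of `t`. The sets `F_{t,s} ∩ (t, m)`, `s ∈ (t, m)`, are the classes
of a partition of `(t, m)` that is noncrossing (A3, A4) and in which two points of a class never
merge in a limit (A6). Unless `[t, m)` contains a smaller gap pair anchored on the right,
multiplicities in `(t, m)` stay below `4` (A5), so by (A7) every class has a second point. Such a
partition cannot exist: consecutive classmates bound an interval that no class leaves, and halving
these intervals squeezes two classmates together. With the mirror image `x ↦ -x`, every gap pair
therefore contains a smaller one inside `(a, b)`. But by Zorn's lemma there is a minimal gap pair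
inside `(a, b)`: by (A6) a nested sequence of gap pairs either collapses onto a sextactic point or
leaves a gap pair in its limit interval.
-/

open Set
open scoped Pointwise

lemma continuous_pr : Continuous pr := AddCircle.continuous_mk' 1

lemma forall_pr_of_forall_Ico {P : S1 → Prop} (t : ℝ) (h : ∀ x ∈ Ico t (t + 1), P (pr x))
    (r : S1) : P r := by
  simpa [pr] using h _ (AddCircle.equivIco 1 t r).2

lemma chain6_pr {a b c d e g : ℝ} (hab : a ≤ b) (hbc : b ≤ c) (hcd : c ≤ d) (hde : d < e)
    (heg : e < g) (hg : g < a + 1) : chain6 (pr a) (pr b) (pr c) (pr d) (pr e) (pr g) :=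
  ⟨a, b, c, d, e, g, rfl, rfl, rfl, rfl, rfl, rfl, hab, hbc, hcd, hde, heg, hg⟩

lemma chain6.neg {p q p' q' p'' q'' : S1} (h : chain6 p q p' q' p'' q'') :
    chain6rev (-p) (-q) (-p') (-q') (-p'') (-q'') := by
  obtain ⟨a, b, c, d, e, g, rfl, rfl, rfl, rfl, rfl, rfl, h⟩ := h
  exact ⟨-a, -b, -c, -d, -e, -g, rfl, rfl, rfl, rfl, rfl, rfl, by grind⟩

lemma chain6rev.neg {p q p' q' p'' q'' : S1} (h : chain6rev p q p' q' p'' q'') :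
    chain6 (-p) (-q) (-p') (-q') (-p'') (-q'') := by
  obtain ⟨a, b, c, d, e, g, rfl, rfl, rfl, rfl, rfl, rfl, h⟩ := h
  exact ⟨-a, -b, -c, -d, -e, -g, rfl, rfl, rfl, rfl, rfl, rfl, by grind⟩

lemma mem_conicDom_neg {I : Set S1} {p q : S1} :
    (p, q) ∈ ConicDom (-I) ↔ (-p, -q) ∈ ConicDom I := by
  simp [ConicDom, ← neg_closure]

namespace IsIntrinsicConicSystem

variable {I : Set S1} {f : S1 → S1 → S1 → ℕ∞} {p q r : S1}

theorem add_two_le (hf : IsIntrinsicConicSystem I f) (hpq : (p, q) ∈ ConicDom I) {n : ℕ}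
    (h : 2 * (n : ℕ∞) < f p q r) : 2 * (n : ℕ∞) + 2 ≤ f p q r := by
  rcases hf.even_values p q r hpq with h' | ⟨k, h'⟩ <;> rw [h'] at h ⊢
  · exact le_top
  · norm_cast at h ⊢
    omega

theorem two_le (hf : IsIntrinsicConicSystem I f) (hpq : (p, q) ∈ ConicDom I)
    (h : f p q r ≠ 0) : 2 ≤ f p q r := by
  simpa using hf.add_two_le hpq (n := 0) (by simpa [pos_iff_ne_zero] using h)

theorem four_le (hf : IsIntrinsicConicSystem I f) (hpq : (p, q) ∈ ConicDom I)
    (h : 2 < f p q r) : 4 ≤ f p q r := by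
  convert hf.add_two_le hpq (n := 1) (by simpa using h) using 1
  norm_num

theorem six_le (hf : IsIntrinsicConicSystem I f) (hpq : (p, q) ∈ ConicDom I)
    (h : 4 < f p q r) : 6 ≤ f p q r := by
  convert hf.add_two_le hpq (n := 2) (by convert h using 1; norm_num) using 1
  norm_num

theorem six_le_sum (hf : IsIntrinsicConicSystem I f) (hpq : (p, q) ∈ ConicDom I)
    {s : Finset S1} (hs : ∀ r, f p q r ≠ 0 → r ∈ s) : 6 ≤ ∑ r ∈ s, f p q r := by
  obtain ⟨t, ht⟩ := hf.total_six p q hpq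
  exact ht.trans (Finset.sum_le_sum_of_ne_zero fun r _ hr => hs r hr)

theorem neg (hf : IsIntrinsicConicSystem I f) :
    IsIntrinsicConicSystem (-I) (fun p q r => f (-p) (-q) (-r)) where
  even_values p q r h := hf.even_values _ _ _ (mem_conicDom_neg.1 h)
  supp_closed p q h := (hf.supp_closed _ _ (mem_conicDom_neg.1 h)).preimage continuous_neg
  self_mem p q h := hf.self_mem _ _ (mem_conicDom_neg.1 h)
  symm p q h := funext fun r => congrFun (hf.symm _ _ (mem_conicDom_neg.1 h)) (-r)
  eq_of_common p q r s hq hr hs h₁ h₂ := funext fun x => congrFun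
    (hf.eq_of_common _ _ _ (-s) (mem_conicDom_neg.1 hq) (mem_conicDom_neg.1 hr)
      (neg_injective.ne hs) h₁ h₂) (-x)
  eq_of_chain p q p' q' p'' q'' hp hq h₁ h₂ hc hp₄ hq₄ := funext fun x => congrFun
    (hf.eq_of_chain _ _ _ _ (-p'') (-q'') (mem_conicDom_neg.1 hp) (mem_conicDom_neg.1 hq) h₁ h₂
      (hc.symm.imp chain6rev.neg chain6.neg) (fun h => hp₄ (neg_injective h))
      (fun h => hq₄ (neg_injective h))) (-x)
  eq_diag p q r h h₄ hr := funext fun x => congrFun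
    (hf.eq_diag _ _ (-r) (mem_conicDom_neg.1 h) h₄ hr) (-x)
  limit_mult pn qn rn₁ rn₂ p q r k₁ k₂ hn h hp hq hr₁ hr₂ hr ht₁ ht₂ hk₁ hk₂ := by
    simp only [← neg_closure, Set.mem_neg] at hr₁ hr₂ hr
    have := hf.limit_mult (-pn) (-qn) (-rn₁) (-rn₂) (-p) (-q) (-r) k₁ k₂
      (fun n => mem_conicDom_neg.1 (hn n)) (mem_conicDom_neg.1 h) hp.neg hq.neg hr₁ hr₂ hr
      ht₁.neg ht₂.neg hk₁ hk₂
    exact ⟨this.1, fun hne => this.2 fun n => neg_injective.ne (hne n)⟩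
  total_six p q h := by
    obtain ⟨s, hs⟩ := hf.total_six _ _ (mem_conicDom_neg.1 h)
    exact ⟨-s, by simpa [Finset.sum_neg_index] using hs⟩
  isolated_of_two p q h h₂ := by
    obtain ⟨U, hU, hpU, hUF⟩ := hf.isolated_of_two _ _ (mem_conicDom_neg.1 h) h₂
    refine ⟨-U, hU.neg, by simpa using hpU, ?_⟩
    change -U ∩ -suppF f (-p) (-q) = {p}
    rw [← Set.inter_neg, hUF, Set.neg_singleton, neg_neg]

end IsIntrinsicConicSystem

lemma neg_mem_uIoo_neg {x y z : ℝ} : -z ∈ uIoo (-x) (-y) ↔ z ∈ uIoo x y := by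
  rcases le_total x y with h | h
  · rw [uIoo_of_le h, uIoo_of_ge (neg_le_neg h)]
    constructor <;> rintro ⟨h₁, h₂⟩ <;> constructor <;> linarith
  · rw [uIoo_of_ge h, uIoo_of_le (neg_le_neg h)]
    constructor <;> rintro ⟨h₁, h₂⟩ <;> constructor <;> linarith

lemma exists_seq_ne_tendsto_of_mem_Icc {a b x : ℝ} (hab : a < b) (hx : x ∈ Icc a b) :
    ∃ u : ℕ → ℝ, (∀ n, u n ∈ Icc a b ∧ u n ≠ x) ∧ Tendsto u atTop (𝓝 x) := by
  rcases hx.2.lt_or_eq with hxb | rfl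
  · obtain ⟨u, -, hu, hux⟩ := exists_seq_strictAnti_tendsto' hxb
    exact ⟨u, fun n => ⟨⟨hx.1.trans (hu n).1.le, (hu n).2.le⟩, (hu n).1.ne'⟩, hux⟩
  · obtain ⟨u, -, hu, hux⟩ := exists_seq_strictMono_tendsto' hab
    exact ⟨u, fun n => ⟨⟨(hu n).1.le, (hu n).2.le⟩, (hu n).2.ne⟩, hux⟩

lemma exists_strictMono_forall_or {P Q : ℕ → Prop} (h : ∀ n, P n ∨ Q n) :
    ∃ φ : ℕ → ℕ, StrictMono φ ∧ ((∀ n, P (φ n)) ∨ ∀ n, Q (φ n)) := by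
  rcases frequently_or_distrib.1 (Frequently.of_forall (f := atTop) h) with hP | hQ
  · obtain ⟨φ, hφ, hφP⟩ := extraction_of_frequently_atTop hP
    exact ⟨φ, hφ, Or.inl hφP⟩
  · obtain ⟨φ, hφ, hφQ⟩ := extraction_of_frequently_atTop hQ
    exact ⟨φ, hφ, Or.inr hφQ⟩

theorem exists_tendsto_of_halving {Q : ℝ → ℝ → Prop} {u₀ v₀ : ℝ} (hQ : ∀ u v, Q u v → u < v)
    (h₀ : Q u₀ v₀)
    (step : ∀ u v, Q u v → ∃ u' v', Q u' v' ∧ u ≤ u' ∧ v' ≤ v ∧ v' - u' ≤ (v - u) / 2) :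
    ∃ (u v : ℕ → ℝ) (c : ℝ), (∀ n, Q (u n) (v n)) ∧ c ∈ Icc u₀ v₀ ∧
      Tendsto u atTop (𝓝 c) ∧ Tendsto v atTop (𝓝 c) := by
  choose! u' v' hstep using step
  set g : ℝ × ℝ → ℝ × ℝ := fun p => (u' p.1 p.2, v' p.1 p.2)
  set seq : ℕ → ℝ × ℝ := fun n => g^[n] (u₀, v₀)
  have hsucc : ∀ n, seq (n + 1) = g (seq n) := fun n => Function.iterate_succ_apply' _ _ _
  have hseq : ∀ n, Q (seq n).1 (seq n).2 := by
    intro n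
    induction n with
    | zero => exact h₀
    | succ n ih => exact hsucc n ▸ (hstep _ _ ih).1
  have hmono : Monotone fun n => (seq n).1 :=
    monotone_nat_of_le_succ fun n => hsucc n ▸ (hstep _ _ (hseq n)).2.1
  have hanti : Antitone fun n => (seq n).2 :=
    antitone_nat_of_succ_le fun n => hsucc n ▸ (hstep _ _ (hseq n)).2.2.1
  have hlen : ∀ n, (seq n).2 - (seq n).1 ≤ (v₀ - u₀) * (1 / 2) ^ n := by
    intro n
    induction n with
    | zero => simp [seq]
    | succ n ih =>
      rw [hsucc, pow_succ]
      linarith [(hstep _ _ (hseq n)).2.2.2]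
  have hle : ∀ n, (seq n).1 ≤ v₀ := fun n => (hQ _ _ (hseq n)).le.trans (hanti (Nat.zero_le n))
  have hbdd : BddAbove (range fun n => (seq n).1) := ⟨v₀, forall_mem_range.2 hle⟩
  have hu := tendsto_atTop_ciSup hmono hbdd
  have hlen0 : Tendsto (fun n => (seq n).2 - (seq n).1) atTop (𝓝 0) := by
    refine squeeze_zero (fun n => sub_nonneg.2 (hQ _ _ (hseq n)).le) hlen ?_
    simpa using (tendsto_pow_atTop_nhds_zero_of_lt_one (r := (1 / 2 : ℝ)) (by norm_num)
      (by norm_num)).const_mul (v₀ - u₀)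
  exact ⟨_, _, _, hseq, ⟨le_ciSup hbdd 0, ciSup_le hle⟩, hu, by simpa using hu.add hlen0⟩

theorem IsChain.exists_seq_tendsto_sSup_sInf {α : Type*} {c : Set (Set α)}
    (hc : IsChain (· ⊆ ·) c) (hne : c.Nonempty) {L R : Set α → ℝ}
    (hLR : ∀ s ∈ c, ∀ s' ∈ c, s ⊆ s' → L s' ≤ L s ∧ R s ≤ R s')
    (hL : BddAbove (L '' c)) (hR : BddBelow (R '' c)) :
    ∃ s : ℕ → Set α, (∀ n, s n ∈ c) ∧ Tendsto (fun n => L (s n)) atTop (𝓝 (sSup (L '' c))) ∧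
      Tendsto (fun n => R (s n)) atTop (𝓝 (sInf (R '' c))) := by
  obtain ⟨l, -, hl, hlc⟩ := exists_seq_tendsto_sSup (hne.image L) hL
  obtain ⟨r, -, hr, hrc⟩ := exists_seq_tendsto_sInf (hne.image R) hR
  -- Of the two members realising `l n` and `r n`, the smaller one realises both bounds.
  have hseq : ∀ n, ∃ s ∈ c, l n ≤ L s ∧ R s ≤ r n := by
    intro n
    obtain ⟨s₁, hs₁, h₁⟩ := hlc n
    obtain ⟨s₂, hs₂, h₂⟩ := hrc n
    rcases hc.total hs₁ hs₂ with h | h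
    · exact ⟨s₁, hs₁, h₁.ge, h₂ ▸ (hLR _ hs₁ _ hs₂ h).2⟩
    · exact ⟨s₂, hs₂, h₁ ▸ (hLR _ hs₂ _ hs₁ h).1, h₂.le⟩
  choose s hsc hls hsr using hseq
  exact ⟨s, hsc, tendsto_of_tendsto_of_tendsto_of_le_of_le hl tendsto_const_nhds hls
      fun n => le_csSup hL (mem_image_of_mem _ (hsc n)),
    tendsto_of_tendsto_of_tendsto_of_le_of_le tendsto_const_nhds hr
      (fun n => csInf_le hR (mem_image_of_mem _ (hsc n))) hsr⟩

theorem exists_minimal_Icc {P : ℝ → ℝ → Prop} {u₀ v₀ : ℝ} (hP : ∀ u v, P u v → u < v)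
    (h₀ : P u₀ v₀)
    (hlim : ∀ (un vn : ℕ → ℝ) (μ ν : ℝ), (∀ n, P (un n) (vn n) ∧ u₀ ≤ un n ∧ vn n ≤ v₀) →
      Tendsto un atTop (𝓝 μ) → Tendsto vn atTop (𝓝 ν) → ∃ u v, P u v ∧ μ ≤ u ∧ v ≤ ν) :
    ∃ u v, P u v ∧ u₀ ≤ u ∧ v ≤ v₀ ∧ ∀ u' v', P u' v' → u ≤ u' → v' ≤ v → u' = u ∧ v' = v := by
  set J := {s : Set ℝ | ∃ u v, s = Icc u v ∧ P u v ∧ u₀ ≤ u ∧ v ≤ v₀}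
  have hJ : ∀ s ∈ J, s = Icc (sInf s) (sSup s) ∧ P (sInf s) (sSup s) ∧ u₀ ≤ sInf s ∧
      sSup s ≤ v₀ := by
    rintro _ ⟨u, v, rfl, huv, hu, hv⟩
    rw [csInf_Icc (hP u v huv).le, csSup_Icc (hP u v huv).le]
    exact ⟨rfl, huv, hu, hv⟩
  have hchain : ∀ c ⊆ J, IsChain (· ⊆ ·) c → c.Nonempty → ∃ lb ∈ J, ∀ s ∈ c, lb ⊆ s := by
    intro c hcJ hc ⟨s₀, hs₀⟩
    have hL : BddAbove (sInf '' c) := ⟨v₀, forall_mem_image.2 fun s hs =>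
      (hP _ _ (hJ s (hcJ hs)).2.1).le.trans (hJ s (hcJ hs)).2.2.2⟩
    have hR : BddBelow (sSup '' c) := ⟨u₀, forall_mem_image.2 fun s hs =>
      (hJ s (hcJ hs)).2.2.1.trans (hP _ _ (hJ s (hcJ hs)).2.1).le⟩
    obtain ⟨s, hsc, hls, hrs⟩ := hc.exists_seq_tendsto_sSup_sInf ⟨s₀, hs₀⟩ (fun s hs s' hs' h => by
      rw [(hJ s (hcJ hs)).1, (hJ s' (hcJ hs')).1] at h
      exact (Icc_subset_Icc_iff (hP _ _ (hJ s (hcJ hs)).2.1).le).1 h) hL hR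
    obtain ⟨u, v, huv, hu, hv⟩ := hlim _ _ _ _ (fun n => (hJ _ (hcJ (hsc n))).2) hls hrs
    have hu' : ∀ s ∈ c, sInf s ≤ u := fun s hs => (le_csSup hL (mem_image_of_mem _ hs)).trans hu
    have hv' : ∀ s ∈ c, v ≤ sSup s := fun s hs => hv.trans (csInf_le hR (mem_image_of_mem _ hs))
    refine ⟨Icc u v, ⟨u, v, rfl, huv, (hJ s₀ (hcJ hs₀)).2.2.1.trans (hu' s₀ hs₀),
      (hv' s₀ hs₀).trans (hJ s₀ (hcJ hs₀)).2.2.2⟩, fun s hs => ?_⟩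
    rw [(hJ s (hcJ hs)).1]
    exact Icc_subset_Icc (hu' s hs) (hv' s hs)
  obtain ⟨M, -, hM⟩ := zorn_superset_nonempty J hchain _ ⟨u₀, v₀, rfl, h₀, le_rfl, le_rfl⟩
  obtain ⟨u, v, rfl, huv, hu, hv⟩ := hM.prop
  refine ⟨u, v, huv, hu, hv, fun u' v' huv' hu' hv' => ?_⟩
  have hsub := hM.2 ⟨u', v', rfl, huv', hu.trans hu', hv'.trans hv⟩ (Icc_subset_Icc hu' hv')
  rw [Icc_subset_Icc_iff (hP u v huv).le] at hsub
  exact ⟨le_antisymm hsub.1 hu', le_antisymm hv' hsub.2⟩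

structure NoncrossingClasses (α β : ℝ) (D : ℝ → Set ℝ) : Prop where
  mem_self : ∀ x ∈ Ioo α β, x ∈ D x
  subset_Ioo : ∀ x ∈ Ioo α β, D x ⊆ Ioo α β
  eq_of_mem : ∀ x ∈ Ioo α β, ∀ y ∈ D x, D y = D x
  noncrossing : ∀ w ∈ Ioo α β, ∀ x ∈ Ioo α β, ∀ y z : ℝ,
    w ≤ x → x < y → y < z → y ∈ D w → z ∈ D x → D w = D x
  no_collapse : ∀ (xs ys zs : ℕ → ℝ) (x₀ c : ℝ), x₀ ∈ Ioo α β → c ∈ Ioo α β →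
    (∀ n, xs n ∈ Ioo α β ∧ ys n ∈ D (xs n) ∧ zs n ∈ D (xs n) ∧ ys n ≠ zs n) →
    Tendsto xs atTop (𝓝 x₀) → Tendsto ys atTop (𝓝 c) → Tendsto zs atTop (𝓝 c) → False

def IsNextInClass (D : ℝ → Set ℝ) (u v : ℝ) : Prop :=
  u < v ∧ v ∈ D u ∧ ∀ z ∈ Ioo u v, z ∉ D u

namespace NoncrossingClasses

variable {α β : ℝ} {D : ℝ → Set ℝ}

theorem exists_isNextInClass_le (hD : NoncrossingClasses α β D) {x y : ℝ} (hx : x ∈ Ioo α β)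
    (hy : y ∈ D x) (hxy : x < y) : ∃ y', IsNextInClass D x y' ∧ y' ≤ y := by
  set S := {z ∈ D x | x < z}
  have hyS : y ∈ S := ⟨hy, hxy⟩
  have hS : BddBelow S := ⟨x, fun z hz => hz.2.le⟩
  by_cases hm : sInf S ∈ S
  · exact ⟨sInf S, ⟨hm.2, hm.1, fun z hz hzD => (csInf_le hS ⟨hzD, hz.1⟩).not_gt hz.2⟩,
      csInf_le hS hyS⟩
  -- Otherwise distinct classmates accumulate at `sInf S`, which `no_collapse` forbids.
  obtain ⟨w, hw, -, hwm, hwS⟩ :=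
    (isGLB_csInf ⟨y, hyS⟩ hS).exists_seq_strictAnti_tendsto_of_notMem hm ⟨y, hyS⟩
  have hmx : x ≤ sInf S := le_csInf ⟨y, hyS⟩ fun z hz => hz.2.le
  have hmy : sInf S ≤ y := csInf_le hS hyS
  exact (hD.no_collapse (fun _ => x) w (fun n => w (n + 1)) x (sInf S) hx
    ⟨hx.1.trans_le hmx, hmy.trans_lt (hD.subset_Ioo x hx hy).2⟩
    (fun n => ⟨hx, (hwS n).1, (hwS (n + 1)).1, (hw n.lt_succ_self).ne'⟩)
    tendsto_const_nhds hwm (hwm.comp (tendsto_add_atTop_nat 1))).elim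

theorem subset_Ioo_of_isNextInClass (hD : NoncrossingClasses α β D) {p q x : ℝ}
    (hp : p ∈ Ioo α β) (hpq : IsNextInClass D p q) (hx : x ∈ Ioo p q) : D x ⊆ Ioo p q := by
  obtain ⟨hpq, hq, hgap⟩ := hpq
  have hxI : x ∈ Ioo α β := ⟨hp.1.trans hx.1, hx.2.trans (hD.subset_Ioo p hp hq).2⟩
  have hxx := hD.mem_self x hxI
  have hne : D x ≠ D p := fun h => hgap x hx (h ▸ hxx)
  intro w hw
  have hwI := hD.subset_Ioo x hxI hw
  have hDw := hD.eq_of_mem x hxI w hw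
  by_contra hwpq
  rcases lt_trichotomy w p with hwp | rfl | hpw
  · exact hne (hDw ▸ hD.noncrossing w hwI p hp x q hwp.le hx.1 hx.2 (hDw ▸ hxx) hq)
  · exact hne hDw.symm
  rcases lt_trichotomy w q with hwq | rfl | hqw
  · exact hwpq ⟨hpw, hwq⟩
  · exact hne (hDw.symm.trans (hD.eq_of_mem p hp w hq))
  · exact hne (hD.noncrossing p hp x hxI q w hx.1.le hx.2 hqw hq hw).symm

theorem exists_isNextInClass_between (hD : NoncrossingClasses α β D) {x y : ℝ}
    (hx : x ∈ Ioo α β) (hy : y ∈ D x) (hyx : y ≠ x) :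
    ∃ u v, u ∈ Ioo α β ∧ IsNextInClass D u v ∧ min x y ≤ u ∧ v ≤ max x y := by
  rcases hyx.lt_or_gt with hyx | hxy
  · have hyI := hD.subset_Ioo x hx hy
    have hxy : x ∈ D y := hD.eq_of_mem x hx y hy ▸ hD.mem_self x hx
    obtain ⟨v, hv, hvx⟩ := hD.exists_isNextInClass_le hyI hxy hyx
    exact ⟨y, v, hyI, hv, min_le_right x y, hvx.trans (le_max_left x y)⟩
  · obtain ⟨v, hv, hvy⟩ := hD.exists_isNextInClass_le hx hy hxy
    exact ⟨x, v, hx, hv, min_le_left x y, hvy.trans (le_max_right x y)⟩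

theorem exists_isNextInClass_half (hD : NoncrossingClasses α β D)
    (hD₂ : ∀ x ∈ Ioo α β, ∃ y ∈ D x, y ≠ x) {u v : ℝ} (hu : u ∈ Ioo α β)
    (huv : IsNextInClass D u v) :
    ∃ u' v', u' ∈ Ioo α β ∧ IsNextInClass D u' v' ∧ u ≤ u' ∧ v' ≤ v ∧
      v' - u' ≤ (v - u) / 2 := by
  have hx : (u + v) / 2 ∈ Ioo u v := ⟨by linarith [huv.1], by linarith [huv.1]⟩
  have hxI : (u + v) / 2 ∈ Ioo α β := ⟨hu.1.trans hx.1, hx.2.trans (hD.subset_Ioo u hu huv.2.1).2⟩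
  obtain ⟨y, hy, hyx⟩ := hD₂ _ hxI
  have hyuv := hD.subset_Ioo_of_isNextInClass hu huv hx hy
  obtain ⟨u', v', hu', huv', hmin, hmax⟩ := hD.exists_isNextInClass_between hxI hy hyx
  refine ⟨u', v', hu', huv', ?_, ?_, ?_⟩ <;>
    rcases le_total y ((u + v) / 2) with h | h <;>
    simp only [min_eq_left, min_eq_right, max_eq_left, max_eq_right, h] at hmin hmax <;>
    linarith [hyuv.1, hyuv.2, hx.1, hx.2]

theorem exists_subsingleton (hD : NoncrossingClasses α β D) (hαβ : α < β) :
    ∃ x ∈ Ioo α β, ∀ y ∈ D x, y = x := by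
  by_contra! hD₂
  have hmid : (α + β) / 2 ∈ Ioo α β := ⟨by linarith, by linarith⟩
  obtain ⟨y, hy, hyx⟩ := hD₂ _ hmid
  obtain ⟨u₀, v₀, hu₀, huv₀, -, -⟩ := hD.exists_isNextInClass_between hmid hy hyx
  -- Halving the successor pair repeatedly squeezes two distinct classmates together.
  obtain ⟨u, v, c, huv, hc, hu, hv⟩ := exists_tendsto_of_halving
    (Q := fun u v => u ∈ Ioo α β ∧ IsNextInClass D u v) (fun u v h => h.2.1) ⟨hu₀, huv₀⟩
    fun u v h => by simpa only [and_assoc] using hD.exists_isNextInClass_half hD₂ h.1 h.2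
  have hc' : c ∈ Ioo α β := ⟨hu₀.1.trans_le hc.1, hc.2.trans_lt (hD.subset_Ioo u₀ hu₀ huv₀.2.1).2⟩
  exact hD.no_collapse u u v c c hc' hc'
    (fun n => ⟨(huv n).1, hD.mem_self _ (huv n).1, (huv n).2.2.1, (huv n).2.1.ne⟩) hu hu hv

end NoncrossingClasses

structure NoSextacticArc where
  a : ℝ
  b : ℝ
  a_lt_b : a < b
  b_lt_a_add_one : b < a + 1
  I : Set S1
  f : S1 → S1 → S1 → ℕ∞
  isConic : IsIntrinsicConicSystem I f
  mem_of_mem_Ioo : ∀ x ∈ Ioo a b, pr x ∈ I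
  lt_six : ∀ p q, (p, q) ∈ ConicDom I → ∀ x ∈ Ioo a b, f p q (pr x) < 6

namespace NoSextacticArc

variable (C : NoSextacticArc) {x y z : ℝ} {p q : S1}

lemma mem_closure (hx : x ∈ Icc C.a C.b) : pr x ∈ closure C.I := by
  rw [← closure_Ioo C.a_lt_b.ne] at hx
  exact closure_mono (image_subset_iff.2 C.mem_of_mem_Ioo)
    (image_closure_subset_closure_image continuous_pr (mem_image_of_mem pr hx))

lemma injOn_pr : InjOn pr (Icc C.a C.b) := fun x hx y hy h =>
  have := C.b_lt_a_add_one
  (AddCircle.coe_eq_coe_iff_of_mem_Ico (a := C.a) ⟨hx.1, by linarith [hx.2]⟩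
    ⟨hy.1, by linarith [hy.2]⟩).1 h

lemma mem_conicDom (hx : x ∈ Icc C.a C.b) (hy : y ∈ Icc C.a C.b) (hxy : x ≠ y) :
    (pr x, pr y) ∈ ConicDom C.I :=
  ⟨C.mem_closure hx, C.mem_closure hy, fun h => absurd (C.injOn_pr hx hy h) hxy⟩

lemma mem_conicDom_self (hx : x ∈ Icc C.a C.b) (hI : pr x ∈ C.I) :
    (pr x, pr x) ∈ ConicDom C.I :=
  ⟨C.mem_closure hx, C.mem_closure hx, fun _ => hI⟩

lemma le_four (hpq : (p, q) ∈ ConicDom C.I) (hx : x ∈ Ioo C.a C.b) : C.f p q (pr x) ≤ 4 :=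
  not_lt.1 fun h => (C.isConic.six_le hpq h).not_gt (C.lt_six p q hpq x hx)

lemma le_two (hpq : (p, q) ∈ ConicDom C.I) {r : S1} (h : C.f p q r < 4) : C.f p q r ≤ 2 :=
  not_lt.1 fun h' => (C.isConic.four_le hpq h').not_gt h

lemma apply_ne_zero_of_tendsto {pn qn : ℕ → S1} (hn : ∀ n, (pn n, qn n) ∈ ConicDom C.I)
    (hpq : (p, q) ∈ ConicDom C.I) (hp : Tendsto pn atTop (𝓝 p)) (hq : Tendsto qn atTop (𝓝 q))
    {u : ℕ → ℝ} (hu : ∀ n, u n ∈ Icc C.a C.b) (hx : x ∈ Icc C.a C.b)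
    (hux : Tendsto u atTop (𝓝 x)) (hfu : ∀ n, C.f (pn n) (qn n) (pr (u n)) ≠ 0) :
    C.f p q (pr x) ≠ 0 := by
  have hu' := fun n => C.isConic.two_le (hn n) (hfu n)
  have h := C.isConic.limit_mult pn qn _ _ p q (pr x) 2 2 hn hpq hp hq
    (fun n => ⟨C.mem_closure (hu n), hfu n⟩) (fun n => ⟨C.mem_closure (hu n), hfu n⟩)
    (C.mem_closure hx) ((continuous_pr.tendsto x).comp hux) ((continuous_pr.tendsto x).comp hux)
    hu' hu'
  exact ne_of_gt (lt_of_lt_of_le (by norm_num) h.1)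

lemma lt_apply_of_tendsto {pn qn : ℕ → S1} (hn : ∀ n, (pn n, qn n) ∈ ConicDom C.I)
    (hpq : (p, q) ∈ ConicDom C.I) (hp : Tendsto pn atTop (𝓝 p)) (hq : Tendsto qn atTop (𝓝 q))
    {u v : ℕ → ℝ} (hu : ∀ n, u n ∈ Icc C.a C.b) (hv : ∀ n, v n ∈ Icc C.a C.b)
    (hx : x ∈ Icc C.a C.b) (hux : Tendsto u atTop (𝓝 x)) (hvx : Tendsto v atTop (𝓝 x))
    (huv : ∀ n, u n ≠ v n) {k : ℕ} (hk : 2 ≤ k)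
    (hfu : ∀ n, (k : ℕ∞) ≤ C.f (pn n) (qn n) (pr (u n)))
    (hfv : ∀ n, C.f (pn n) (qn n) (pr (v n)) ≠ 0) : (k : ℕ∞) < C.f p q (pr x) := by
  have hk' : (2 : ℕ∞) ≤ k := by exact_mod_cast hk
  have h := C.isConic.limit_mult pn qn _ _ p q (pr x) k 2 hn hpq hp hq
    (fun n => ⟨C.mem_closure (hu n), (lt_of_lt_of_le (by norm_num) (hk'.trans (hfu n))).ne'⟩)
    (fun n => ⟨C.mem_closure (hv n), hfv n⟩) (C.mem_closure hx)
    ((continuous_pr.tendsto x).comp hux) ((continuous_pr.tendsto x).comp hvx) hfu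
    (fun n => C.isConic.two_le (hn n) (hfv n))
  simpa [max_eq_left hk] using h.2 fun n => C.injOn_pr.ne (hu n) (hv n) (huv n)

lemma four_le_apply_self (hx : x ∈ Icc C.a C.b) (hI : pr x ∈ C.I) :
    4 ≤ C.f (pr x) (pr x) (pr x) := by
  obtain ⟨u, hu, hux⟩ := exists_seq_ne_tendsto_of_mem_Icc C.a_lt_b hx
  have hn : ∀ n, (pr x, pr (u n)) ∈ ConicDom C.I := fun n =>
    C.mem_conicDom hx (hu n).1 (hu n).2.symm
  have hdom := C.mem_conicDom_self hx hI
  refine C.isConic.four_le hdom ?_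
  simpa using C.lt_apply_of_tendsto hn hdom tendsto_const_nhds
    ((continuous_pr.tendsto x).comp hux) (fun _ => hx) (fun n => (hu n).1) hx tendsto_const_nhds
    hux (fun n => (hu n).2.symm) le_rfl
    (fun n => C.isConic.two_le (hn n) (C.isConic.self_mem _ _ (hn n)).1)
    (fun n => (C.isConic.self_mem _ _ (hn n)).2)

def neg : NoSextacticArc where
  a := -C.b
  b := -C.a
  a_lt_b := neg_lt_neg C.a_lt_b
  b_lt_a_add_one := by linarith [C.b_lt_a_add_one]
  I := -C.I
  f p q r := C.f (-p) (-q) (-r)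
  isConic := C.isConic.neg
  mem_of_mem_Ioo x hx := C.mem_of_mem_Ioo (-x) (Set.neg_mem_Ioo_iff.2 hx)
  lt_six p q hpq x hx := C.lt_six _ _ (mem_conicDom_neg.1 hpq) (-x) (Set.neg_mem_Ioo_iff.2 hx)

@[simp] lemma neg_a : C.neg.a = -C.b := rfl

@[simp] lemma neg_b : C.neg.b = -C.a := rfl

lemma neg_mem_Icc_neg : -x ∈ Icc C.neg.a C.neg.b ↔ x ∈ Icc C.a C.b := by
  simp [and_comm]

lemma neg_mem_Ioo_neg : -x ∈ Ioo C.neg.a C.neg.b ↔ x ∈ Ioo C.a C.b := by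
  simp [and_comm]

lemma neg_f_pr : C.neg.f (pr x) (pr y) (pr z) = C.f (pr (-x)) (pr (-y)) (pr (-z)) := rfl

/-- `y` is the point of the support of `f_{x,x}` closest to `x` on its side of `x`. -/
structure IsGap (x y : ℝ) : Prop where
  anchor_mem : x ∈ Icc C.a C.b
  pr_anchor_mem : pr x ∈ C.I
  far_mem : y ∈ Icc C.a C.b
  ne : x ≠ y
  apply_far_ne_zero : C.f (pr x) (pr x) (pr y) ≠ 0
  apply_eq_zero : ∀ z ∈ uIoo x y, C.f (pr x) (pr x) (pr z) = 0

variable {C} in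
lemma IsGap.neg (h : C.IsGap x y) : C.neg.IsGap (-x) (-y) where
  anchor_mem := C.neg_mem_Icc_neg.2 h.anchor_mem
  pr_anchor_mem := show pr (-(-x)) ∈ C.I by rw [neg_neg]; exact h.pr_anchor_mem
  far_mem := C.neg_mem_Icc_neg.2 h.far_mem
  ne := neg_injective.ne h.ne
  apply_far_ne_zero := by simpa [neg_f_pr] using h.apply_far_ne_zero
  apply_eq_zero z hz := by
    simpa [neg_f_pr] using h.apply_eq_zero (-z) (neg_mem_uIoo_neg.1 (by rwa [neg_neg]))

variable {C} in
lemma IsGap.of_neg (h : C.neg.IsGap x y) : C.IsGap (-x) (-y) where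
  anchor_mem := C.neg_mem_Icc_neg.1 (by simpa using h.anchor_mem)
  pr_anchor_mem := h.pr_anchor_mem
  far_mem := C.neg_mem_Icc_neg.1 (by simpa using h.far_mem)
  ne := neg_injective.ne h.ne
  apply_far_ne_zero := h.apply_far_ne_zero
  apply_eq_zero z hz := by
    simpa [neg_f_pr] using h.apply_eq_zero (-z) (by rwa [← neg_mem_uIoo_neg, neg_neg])

lemma exists_isGap_of_lt (hx : x ∈ Ioo C.a C.b) (hy : y ∈ Icc C.a C.b) (hxy : x < y)
    (hf : C.f (pr x) (pr x) (pr y) ≠ 0) : ∃ y' ∈ Ioc x y, C.IsGap x y' := by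
  have hx' : x ∈ Icc C.a C.b := Ioo_subset_Icc_self hx
  have hdom := C.mem_conicDom_self hx' (C.mem_of_mem_Ioo x hx)
  set S := {z ∈ Ioc x y | C.f (pr x) (pr x) (pr z) ≠ 0}
  have hyS : y ∈ S := ⟨⟨hxy, le_rfl⟩, hf⟩
  have hS : BddBelow S := ⟨x, fun z hz => hz.1.1.le⟩
  have hmx : x ≤ sInf S := le_csInf ⟨y, hyS⟩ fun z hz => hz.1.1.le
  have hmy : sInf S ≤ y := csInf_le hS hyS
  obtain ⟨w, -, hw, hwS⟩ := exists_seq_tendsto_sInf ⟨y, hyS⟩ hS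
  have hwI : ∀ n, w n ∈ Icc C.a C.b := fun n =>
    ⟨hx.1.le.trans (hwS n).1.1.le, (hwS n).1.2.trans hy.2⟩
  have hm : sInf S ∈ Icc C.a C.b := ⟨hx.1.le.trans hmx, hmy.trans hy.2⟩
  -- The support cannot accumulate at `x` itself: that would make `x` sextactic.
  have hmx' : x < sInf S := by
    refine hmx.lt_of_ne fun h => ?_
    have h4 := C.lt_apply_of_tendsto (fun _ => hdom) hdom tendsto_const_nhds tendsto_const_nhds
      (fun _ => hx') hwI hx' tendsto_const_nhds (h ▸ hw) (fun n => (hwS n).1.1.ne) (k := 4)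
      (by norm_num) (fun _ => by exact_mod_cast C.four_le_apply_self hx' (C.mem_of_mem_Ioo x hx))
      fun n => (hwS n).2
    exact (C.le_four hdom hx).not_gt (by exact_mod_cast h4)
  refine ⟨sInf S, ⟨hmx', hmy⟩, hx', C.mem_of_mem_Ioo x hx, hm, hmx'.ne,
    C.apply_ne_zero_of_tendsto (fun _ => hdom) hdom tendsto_const_nhds tendsto_const_nhds hwI hm
      hw fun n => (hwS n).2, fun z hz => ?_⟩
  rw [uIoo_of_lt hmx'] at hz
  by_contra hfz
  exact (csInf_le hS ⟨⟨hz.1, hz.2.le.trans hmy⟩, hfz⟩).not_gt hz.2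

lemma exists_isGap (hx : x ∈ Ioo C.a C.b) (hy : y ∈ Icc C.a C.b) (hxy : x ≠ y)
    (hf : C.f (pr x) (pr x) (pr y) ≠ 0) : ∃ y' ∈ uIcc x y, C.IsGap x y' := by
  rcases hxy.lt_or_gt with hxy | hyx
  · obtain ⟨y', hy', h⟩ := C.exists_isGap_of_lt hx hy hxy hf
    exact ⟨y', Icc_subset_uIcc (Ioc_subset_Icc_self hy'), h⟩
  · obtain ⟨y', hy', h⟩ := C.neg.exists_isGap_of_lt (C.neg_mem_Ioo_neg.2 hx)
      (C.neg_mem_Icc_neg.2 hy) (neg_lt_neg hyx) (by simpa [neg_f_pr] using hf)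
    refine ⟨-y', Icc_subset_uIcc' ⟨by linarith [hy'.2], by linarith [hy'.1]⟩, ?_⟩
    simpa using h.of_neg

namespace IsGap

variable {C} {s t m : ℝ}

lemma mem_Icc (h : C.IsGap t m) (hs : s ∈ Icc t m) : s ∈ Icc C.a C.b :=
  ⟨h.anchor_mem.1.trans hs.1, hs.2.trans h.far_mem.2⟩

lemma mem_conicDom (h : C.IsGap t m) (hs : s ∈ Ioc t m) : (pr t, pr s) ∈ ConicDom C.I :=
  C.mem_conicDom h.anchor_mem (h.mem_Icc (Ioc_subset_Icc_self hs)) hs.1.ne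

lemma pr_ne (h : C.IsGap t m) (hs : s ∈ Ioc t m) : pr s ≠ pr t :=
  C.injOn_pr.ne (h.mem_Icc (Ioc_subset_Icc_self hs)) h.anchor_mem hs.1.ne'

lemma apply_far_eq (h : C.IsGap t m) (htm : t < m) :
    C.f (pr t) (pr m) = C.f (pr t) (pr t) :=
  C.isConic.eq_of_common _ _ _ (pr m) (h.mem_conicDom ⟨htm, le_rfl⟩)
    (C.mem_conicDom_self h.anchor_mem h.pr_anchor_mem) (h.pr_ne ⟨htm, le_rfl⟩)
    (C.isConic.self_mem _ _ (h.mem_conicDom ⟨htm, le_rfl⟩)).2 h.apply_far_ne_zero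

lemma apply_ne_apply_self (h : C.IsGap t m) (htm : t < m) (hs : s ∈ Ioo t m) :
    C.f (pr t) (pr s) ≠ C.f (pr t) (pr t) := fun he => by
  have := (C.isConic.self_mem _ _ (h.mem_conicDom (Ioo_subset_Ioc_self hs))).2
  rw [he] at this
  exact this (h.apply_eq_zero s (by rwa [uIoo_of_lt htm]))

lemma apply_eq_zero_of_le (h : C.IsGap t m) (htm : t < m) (hs : s ∈ Ioo t m) {ζ : ℝ}
    (hζ : ζ ∈ Ico m (t + 1)) : C.f (pr t) (pr s) (pr ζ) = 0 := by
  by_contra hne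
  have hts := h.mem_conicDom (Ioo_subset_Ioc_self hs)
  refine h.apply_ne_apply_self htm hs ?_
  rcases hζ.1.eq_or_lt with rfl | hmζ
  · rw [← h.apply_far_eq htm]
    exact C.isConic.eq_of_common _ _ _ (pr m) hts (h.mem_conicDom ⟨htm, le_rfl⟩)
      (h.pr_ne ⟨htm, le_rfl⟩) hne (C.isConic.self_mem _ _ (h.mem_conicDom ⟨htm, le_rfl⟩)).2
  · exact (C.isConic.eq_of_chain _ _ _ _ (pr m) (pr ζ)
      (C.mem_conicDom_self h.anchor_mem h.pr_anchor_mem) hts h.apply_far_ne_zero hne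
      (Or.inl (chain6_pr le_rfl le_rfl hs.1.le hs.2 hmζ hζ.2))
      (fun _ => C.four_le_apply_self h.anchor_mem h.pr_anchor_mem)
      (fun e => absurd e.symm (h.pr_ne (Ioo_subset_Ioc_self hs)))).symm

lemma apply_anchor_lt_four (h : C.IsGap t m) (htm : t < m) (hs : s ∈ Ioo t m) :
    C.f (pr t) (pr s) (pr t) < 4 := by
  by_contra! h4
  exact h.apply_ne_apply_self htm hs (C.isConic.eq_diag _ _ _
    (h.mem_conicDom (Ioo_subset_Ioc_self hs)) h4 h.pr_anchor_mem).symm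

lemma exists_ne_apply_ne_zero (h : C.IsGap t m) (htm : t < m) (hs : s ∈ Ioo t m)
    (h4 : C.f (pr t) (pr s) (pr s) < 4) :
    ∃ z ∈ Ioo t m, z ≠ s ∧ C.f (pr t) (pr s) (pr z) ≠ 0 := by
  by_contra! hno
  have hts := h.mem_conicDom (Ioo_subset_Ioc_self hs)
  have hsupp : ∀ r, C.f (pr t) (pr s) r ≠ 0 → r ∈ ({pr t, pr s} : Finset S1) := by
    refine forall_pr_of_forall_Ico t fun ζ hζ hne => ?_
    simp only [Finset.mem_insert, Finset.mem_singleton]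
    rcases hζ.1.eq_or_lt with rfl | htζ
    · exact Or.inl rfl
    by_cases hζm : ζ < m
    · exact Or.inr (congrArg pr (by_contra fun h' => hne (hno ζ ⟨htζ, hζm⟩ h')))
    · exact absurd (h.apply_eq_zero_of_le htm hs ⟨not_lt.1 hζm, hζ.2⟩) hne
  have h6 := C.isConic.six_le_sum hts hsupp
  rw [Finset.sum_pair (h.pr_ne (Ioo_subset_Ioc_self hs)).symm] at h6
  have h22 := add_le_add (C.le_two hts (h.apply_anchor_lt_four htm hs)) (C.le_two hts h4)
  exact absurd (h6.trans h22) (by norm_num)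

lemma exists_isGap_of_four_le (h : C.IsGap t m) {z : ℝ} (hs : s ∈ Ioo t m) (hz : z ∈ Ioo t m)
    (h4 : 4 ≤ C.f (pr t) (pr s) (pr z)) : ∃ u, C.IsGap z u ∧ t ≤ u ∧ u < z := by
  have hts := h.mem_conicDom (Ioo_subset_Ioc_self hs)
  have hzI : z ∈ Ioo C.a C.b := ⟨h.anchor_mem.1.trans_lt hz.1, hz.2.trans_le h.far_mem.2⟩
  have hzt : C.f (pr z) (pr z) (pr t) ≠ 0 := by
    rw [C.isConic.eq_diag _ _ _ hts h4 (C.mem_of_mem_Ioo z hzI)]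
    exact (C.isConic.self_mem _ _ hts).1
  obtain ⟨u, hu, hzu⟩ := C.exists_isGap hzI h.anchor_mem hz.1.ne' hzt
  rw [uIcc_of_ge hz.1.le] at hu
  exact ⟨u, hzu, hu.1, hu.2.lt_of_ne hzu.ne.symm⟩

/-- The sets `F_{t,s} ∩ (t, m)`, `s ∈ (t, m)`, would form noncrossing classes of at least two
points each. -/
theorem exists_nested (h : C.IsGap t m) (htm : t < m) :
    ∃ z u, C.IsGap z u ∧ t ≤ u ∧ u < z ∧ z < m := by
  by_contra! hno
  have hIoo : ∀ {s}, s ∈ Ioo t m → s ∈ Ioo C.a C.b := fun hs =>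
    ⟨h.anchor_mem.1.trans_lt hs.1, hs.2.trans_le h.far_mem.2⟩
  have hdom : ∀ {s}, s ∈ Ioo t m → (pr t, pr s) ∈ ConicDom C.I := fun hs =>
    h.mem_conicDom (Ioo_subset_Ioc_self hs)
  have hne : ∀ {s}, s ∈ Ioo t m → pr t ≠ pr s := fun hs =>
    (h.pr_ne (Ioo_subset_Ioc_self hs)).symm
  have hlt4 : ∀ {s z}, s ∈ Ioo t m → z ∈ Ioo t m → C.f (pr t) (pr s) (pr z) < 4 := by
    intro s z hs hz
    by_contra! h4
    obtain ⟨u, hzu, hu, huz⟩ := h.exists_isGap_of_four_le hs hz h4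
    exact (hno z u hzu hu huz).not_gt hz.2
  set D : ℝ → Set ℝ := fun s => {z ∈ Ioo t m | C.f (pr t) (pr s) (pr z) ≠ 0}
  have hD : NoncrossingClasses t m D :=
    { mem_self := fun s hs => ⟨hs, (C.isConic.self_mem _ _ (hdom hs)).2⟩
      subset_Ioo := fun _ _ _ hz => hz.1
      eq_of_mem := fun s hs z hz => by
        simp only [D, C.isConic.eq_of_common _ _ _ (pr z) (hdom hz.1) (hdom hs) (hne hz.1).symm
          (C.isConic.self_mem _ _ (hdom hz.1)).2 hz.2]
      noncrossing := fun w hw x hx y z hwx hxy hyz hy hz => by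
        have hchain := chain6_pr le_rfl hw.1.le hwx hxy hyz
          (by linarith [hz.1.2, h.far_mem.2, h.anchor_mem.1, C.b_lt_a_add_one])
        simp only [D, C.isConic.eq_of_chain _ _ _ _ _ _ (hdom hw) (hdom hx) hy.2 hz.2
          (Or.inl hchain) (fun e => absurd e (hne hw)) (fun e => absurd e (hne hx))]
      no_collapse := fun xs ys zs x₀ c hx₀ hc hn hxs hys hzs => by
        have h2 := C.lt_apply_of_tendsto (fun n => hdom (hn n).1) (hdom hx₀) tendsto_const_nhds
          ((continuous_pr.tendsto x₀).comp hxs) (fun n => Ioo_subset_Icc_self (hIoo (hn n).2.1.1))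
          (fun n => Ioo_subset_Icc_self (hIoo (hn n).2.2.1.1)) (Ioo_subset_Icc_self (hIoo hc))
          hys hzs (fun n => (hn n).2.2.2) le_rfl
          (fun n => C.isConic.two_le (hdom (hn n).1) (hn n).2.1.2) (fun n => (hn n).2.2.1.2)
        exact (hlt4 hx₀ hc).not_ge (C.isConic.four_le (hdom hx₀) h2) }
  obtain ⟨s, hs, hDs⟩ := hD.exists_subsingleton htm
  obtain ⟨z, hz, hzs, hfz⟩ := h.exists_ne_apply_ne_zero htm hs (hlt4 hs hs)
  exact hzs (hDs z ⟨hz, hfz⟩)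

theorem exists_nested_of_gt (h : C.IsGap m t) (htm : t < m) :
    ∃ u z, C.IsGap u z ∧ t < u ∧ u < z ∧ z ≤ m := by
  obtain ⟨z, u, hzu, hu, huz, hz⟩ := h.neg.exists_nested (neg_lt_neg htm)
  exact ⟨-z, -u, hzu.of_neg, by linarith, by linarith, by linarith⟩

end IsGap

lemma exists_isGap_of_tendsto {xs ys : ℕ → ℝ} (hn : ∀ n, C.IsGap (xs n) (ys n))
    (hx : x ∈ Ioo C.a C.b) (hy : y ∈ Ioo C.a C.b) (hxs : Tendsto xs atTop (𝓝 x))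
    (hys : Tendsto ys atTop (𝓝 y)) : ∃ y' ∈ uIcc x y, C.IsGap x y' := by
  have hx' := Ioo_subset_Icc_self hx
  have hdom := C.mem_conicDom_self hx' (C.mem_of_mem_Ioo x hx)
  have hdomn : ∀ n, (pr (xs n), pr (xs n)) ∈ ConicDom C.I := fun n =>
    C.mem_conicDom_self (hn n).anchor_mem (hn n).pr_anchor_mem
  have hp := (continuous_pr.tendsto x).comp hxs
  have hxy : x ≠ y := by
    rintro rfl
    have h4 := C.lt_apply_of_tendsto hdomn hdom hp hp (fun n => (hn n).anchor_mem)
      (fun n => (hn n).far_mem) hx' hxs hys (fun n => (hn n).ne) (k := 4) (by norm_num)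
      (fun n => by exact_mod_cast C.four_le_apply_self (hn n).anchor_mem (hn n).pr_anchor_mem)
      (fun n => (hn n).apply_far_ne_zero)
    exact (C.le_four hdom hx).not_gt (by exact_mod_cast h4)
  exact C.exists_isGap hx (Ioo_subset_Icc_self hy) hxy (C.apply_ne_zero_of_tendsto hdomn hdom
    hp hp (fun n => (hn n).far_mem) (Ioo_subset_Icc_self hy) hys fun n => (hn n).apply_far_ne_zero)

lemma exists_isGap_between_of_tendsto {un vn : ℕ → ℝ} {μ ν : ℝ}
    (hn : ∀ n, C.IsGap (un n) (vn n) ∨ C.IsGap (vn n) (un n)) (hμ : μ ∈ Ioo C.a C.b)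
    (hν : ν ∈ Ioo C.a C.b) (hμν : μ ≤ ν) (hun : Tendsto un atTop (𝓝 μ))
    (hvn : Tendsto vn atTop (𝓝 ν)) :
    ∃ u v, μ ≤ u ∧ u < v ∧ v ≤ ν ∧ (C.IsGap u v ∨ C.IsGap v u) := by
  obtain ⟨φ, hφ, h | h⟩ := exists_strictMono_forall_or hn
  · obtain ⟨y, hy, h'⟩ := C.exists_isGap_of_tendsto h hμ hν (hun.comp hφ.tendsto_atTop)
      (hvn.comp hφ.tendsto_atTop)
    rw [uIcc_of_le hμν] at hy
    exact ⟨μ, y, le_rfl, hy.1.lt_of_ne h'.ne, hy.2, Or.inl h'⟩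
  · obtain ⟨y, hy, h'⟩ := C.exists_isGap_of_tendsto h hν hμ (hvn.comp hφ.tendsto_atTop)
      (hun.comp hφ.tendsto_atTop)
    rw [uIcc_of_ge hμν] at hy
    exact ⟨y, ν, hy.1, hy.2.lt_of_ne h'.ne.symm, le_rfl, Or.inr h'⟩

theorem not_isGap_of_mem_Ioo (hx : x ∈ Ioo C.a C.b) (hy : y ∈ Ioo C.a C.b) : ¬ C.IsGap x y := by
  intro hxy
  set P : ℝ → ℝ → Prop := fun u v => u < v ∧ (C.IsGap u v ∨ C.IsGap v u)
  have hK : Icc (min x y) (max x y) ⊆ Ioo C.a C.b := fun z hz =>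
    ⟨(lt_min hx.1 hy.1).trans_le hz.1, hz.2.trans_lt (max_lt hx.2 hy.2)⟩
  have hP₀ : P (min x y) (max x y) := by
    rcases hxy.ne.lt_or_gt with h | h
    · rw [min_eq_left h.le, max_eq_right h.le]
      exact ⟨h, Or.inl hxy⟩
    · rw [min_eq_right h.le, max_eq_left h.le]
      exact ⟨h, Or.inr hxy⟩
  obtain ⟨u, v, ⟨huv, hgap⟩, -, -, hmin⟩ :=
    exists_minimal_Icc (fun u v h => h.1) hP₀ fun un vn μ ν hn hun hvn => by
      have hμ : μ ∈ Icc (min x y) (max x y) := ⟨ge_of_tendsto' hun fun n => (hn n).2.1,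
        le_of_tendsto' hun fun n => (hn n).1.1.le.trans (hn n).2.2⟩
      have hν : ν ∈ Icc (min x y) (max x y) := ⟨ge_of_tendsto' hvn fun n =>
        (hn n).2.1.trans (hn n).1.1.le, le_of_tendsto' hvn fun n => (hn n).2.2⟩
      obtain ⟨u, v, hu, huv, hv, h⟩ := C.exists_isGap_between_of_tendsto (fun n => (hn n).1.2)
        (hK hμ) (hK hν) (le_of_tendsto_of_tendsto' hun hvn fun n => (hn n).1.1.le) hun hvn
      exact ⟨u, v, ⟨huv, h⟩, hu, hv⟩
  rcases hgap with h | h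
  · obtain ⟨z, w, hzw, hw, hwz, hz⟩ := h.exists_nested huv
    exact hz.ne (hmin w z ⟨hwz, Or.inr hzw⟩ hw hz.le).2
  · obtain ⟨w, z, hwz, hw, hwz', hz⟩ := h.exists_nested_of_gt huv
    exact hw.ne' (hmin w z ⟨hwz', Or.inl hwz⟩ hw.le hz).1

theorem not_isGap : ¬ C.IsGap x y := by
  intro h
  have ha := h.anchor_mem
  have hb := h.far_mem
  rcases h.ne.lt_or_gt with hxy | hyx
  · obtain ⟨z, u, hzu, hu, huz, hz⟩ := h.exists_nested hxy
    obtain ⟨u', z', h', hu', huz', hz'⟩ := hzu.exists_nested_of_gt huz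
    exact C.not_isGap_of_mem_Ioo ⟨by linarith [ha.1], by linarith [hb.2]⟩
      ⟨by linarith [ha.1], by linarith [hb.2]⟩ h'
  · obtain ⟨u, z, huz', hu, huz, hz⟩ := h.exists_nested_of_gt hyx
    obtain ⟨z', u', h', hu', huz'', hz'⟩ := huz'.exists_nested huz
    exact C.not_isGap_of_mem_Ioo ⟨by linarith [hb.1], by linarith [ha.2]⟩
      ⟨by linarith [hb.1], by linarith [ha.2]⟩ h'

end NoSextacticArc

/-- **Proposition 3.11.** If `F_{a,b}` misses the open arc `(a,b)` and
`f_{a,b}` agrees with a meaningful diagonal function at an endpoint, then there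
is a sextactic point in `(a,b)`. -/
theorem conicSystem_exists_sextactic
    (a b : ℝ) (hab : a < b) (hb1 : b < a + 1)
    (I : Set S1) (hI : I = arcCC a b ∨ I = arcCO a b ∨ I = arcOC a b)
    (f : S1 → S1 → S1 → ℕ∞)
    (hf : IsIntrinsicConicSystem I f)
    (hdisj : suppF f (pr a) (pr b) ∩ arcOO a b = ∅)
    (hend : ((pr a, pr a) ∈ ConicDom I ∧ f (pr a) (pr b) = f (pr a) (pr a)) ∨
      ((pr b, pr b) ∈ ConicDom I ∧ f (pr a) (pr b) = f (pr b) (pr b))) :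
    ∃ c : ℝ, a < c ∧ c < b ∧
      ∃ p q : S1, (p, q) ∈ ConicDom I ∧ 6 ≤ f p q (pr c) := by
  by_contra! hno
  have hIoo : ∀ x ∈ Ioo a b, pr x ∈ I := fun x hx => by
    rcases hI with rfl | rfl | rfl
    exacts [⟨x, Ioo_subset_Icc_self hx, rfl⟩, ⟨x, Ioo_subset_Ico_self hx, rfl⟩,
      ⟨x, Ioo_subset_Ioc_self hx, rfl⟩]
  let C : NoSextacticArc := ⟨a, b, hab, hb1, I, f, hf, hIoo, fun p q hpq x hx =>
    hno x hx.1 hx.2 p q hpq⟩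
  have ha : a ∈ Icc a b := left_mem_Icc.2 hab.le
  have hb : b ∈ Icc a b := right_mem_Icc.2 hab.le
  have hab' : (pr a, pr b) ∈ ConicDom I := C.mem_conicDom ha hb hab.ne
  have hzero : ∀ z ∈ uIoo a b, f (pr a) (pr b) (pr z) = 0 := fun z hz => by
    rw [uIoo_of_lt hab] at hz
    by_contra h
    exact hdisj.subset ⟨h, z, hz, rfl⟩
  have hCf : C.f = f := rfl
  rcases hend with ⟨haa, he⟩ | ⟨hbb, he⟩
  · refine C.not_isGap (x := a) (y := b) ⟨ha, haa.2.2 rfl, hb, hab.ne, ?_, ?_⟩ <;>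
      rw [hCf, ← he]
    exacts [(hf.self_mem _ _ hab').2, hzero]
  · refine C.not_isGap (x := b) (y := a) ⟨hb, hbb.2.2 rfl, ha, hab.ne', ?_, ?_⟩ <;>
      rw [hCf, ← he]
    exacts [(hf.self_mem _ _ hab').1, uIoo_comm a b ▸ hzero]
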